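/- Let n ≥ 3 and let d_1 ≥ ... ≥ d_n be a graphical sequence such that every realization is 2-connected (d is forcibly biconnected). Then d_n ≥ 2 and the sum d_1 + ... + d_n ≥ 2(d_1 + n − 2). -/

import Mathlib

open SimpleGraph Finset

/-
A realization `G` of `d` is 2-connected. A vertex `v` has a neighbour `u`, and `v` still has a
neighbour in the connected graph `G - u`, so `dₙ ≥ 2`. Deleting the vertex `v` of degree `d₁`
removes exactly `d₁` edges and leaves a connected graph on `n - 1` vertices, which has at least
`n - 2` edges; hence `Σ dᵢ = 2|E(G)| ≥ 2(d₁ + n - 2)`.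
-/

/-- A graph is 2-connected (biconnected) if it is connected, has at least 3 vertices,
and removing any single vertex leaves a connected graph. -/
def TwoConnected {V : Type*} [Fintype V] (G : SimpleGraph V) : Prop :=
  G.Connected ∧ 3 ≤ Fintype.card V ∧ ∀ v : V, (G.induce ({v}ᶜ : Set V)).Connected

lemma Nat.card_compl_singleton {V : Type*} [Finite V] (v : V) :
    Nat.card ({v}ᶜ : Set V) = Nat.card V - 1 := by
  rw [Nat.card_coe_set_eq, Set.ncard_compl, Set.ncard_singleton]

namespace SimpleGraph

variable {V : Type*} [Fintype V]

lemma degree_add_card_le_card_edgeFinset_add_two (G : SimpleGraph V) [DecidableEq V]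
    [DecidableRel G.Adj] {v : V} (h : (G.induce ({v}ᶜ : Set V)).Connected) :
    G.degree v + Fintype.card V ≤ #G.edgeFinset + 2 := by
  have hcompl : Nat.card ({v}ᶜ : Set V) + 1 = Fintype.card V := by
    rw [Nat.card_compl_singleton, Nat.card_eq_fintype_card]
    have := Fintype.card_pos_iff.mpr ⟨v⟩
    omega
  have hdel : #(G.induce ({v}ᶜ : Set V)).edgeFinset = #G.edgeFinset - G.degree v := by
    rw [card_edgeFinset_induce_compl_singleton, card_edgeFinset_deleteIncidenceSet]
  have hconn := h.card_vert_le_card_edgeSet_add_one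
  rw [Nat.card_eq_fintype_card (α := (G.induce _).edgeSet), ← edgeFinset_card, hdel] at hconn
  have := G.degree_le_card_edgeFinset v
  omega

lemma TwoConnected.two_le_degree {G : SimpleGraph V} [DecidableRel G.Adj] (hG : TwoConnected G)
    (v : V) : 2 ≤ G.degree v := by
  obtain ⟨hconn, hcard, hdel⟩ := hG
  have : Nontrivial V := Fintype.one_lt_card_iff_nontrivial.mp (by omega)
  obtain ⟨u, hvu⟩ := hconn.preconnected.exists_adj_of_nontrivial v
  have : Nontrivial ({u}ᶜ : Set V) := by
    rw [← Finite.one_lt_card_iff_nontrivial, Nat.card_compl_singleton, Nat.card_eq_fintype_card]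
    omega
  obtain ⟨w, hvw⟩ := (hdel u).preconnected.exists_adj_of_nontrivial ⟨v, hvu.ne⟩
  rw [← card_neighborFinset_eq_degree]
  exact one_lt_card_iff.mpr ⟨u, w, (G.mem_neighborFinset _ _).mpr hvu,
    (G.mem_neighborFinset _ _).mpr hvw, fun huw => w.2 huw.symm⟩

end SimpleGraph

/-- If a graphical sequence `d` of length `n ≥ 3` is forcibly biconnected (every realization
is 2-connected), then `dₙ ≥ 2` and `Σ dᵢ ≥ 2(d₁ + n - 2)` (the Wang–Kleitman necessary
condition for potential 2-connectedness). -/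
theorem stmt_16 {n : ℕ} (hn : 3 ≤ n) (d : Fin n → ℕ)
    (hgraphical : ∃ (G : SimpleGraph (Fin n)) (_ : DecidableRel G.Adj)
      (σ : Equiv.Perm (Fin n)), ∀ i, G.degree (σ i) = d i)
    (hforcibly : ∀ (G : SimpleGraph (Fin n)) (_ : DecidableRel G.Adj),
      (∃ σ : Equiv.Perm (Fin n), ∀ i, G.degree (σ i) = d i) → TwoConnected G) :
    2 ≤ d ⟨n - 1, by omega⟩ ∧ 2 * (d ⟨0, by omega⟩ + n - 2) ≤ ∑ i, d i := by
  obtain ⟨G, _, σ, hσ⟩ := hgraphical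
  have hG : TwoConnected G := hforcibly G _ ⟨σ, hσ⟩
  have hsum : ∑ i, d i = 2 * #G.edgeFinset := by
    simp_rw [← hσ]
    rw [Equiv.sum_comp σ (fun v => G.degree v), sum_degrees_eq_twice_card_edges]
  have hedges := G.degree_add_card_le_card_edgeFinset_add_two (hG.2.2 (σ ⟨0, by omega⟩))
  rw [hσ, Fintype.card_fin] at hedges
  exact ⟨hσ ⟨n - 1, by omega⟩ ▸ hG.two_le_degree _, by omega⟩
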